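/- Let λ₁ > λ₂ ≥ 0, assume σ^ft_i ≠ σ_i for every 1 ≤ i ≤ d, and set m = min_{1≤i≤d}(σ_i − σ^ft_i)², c = 1/(1 + λ₂)² − 1/(1 + λ₁)² > 0, and c' = λ₁²/(1 + λ₁)² − λ₂²/(1 + λ₂)² > 0. For j ∈ {1, 2} and each n ∈ {0, 1, …, d}, let θ_jⁿ ∈ ℝ^{d×d} satisfy |L_pre(θ_jⁿ) − L_pre(U·M_n^{λ_j}·Vᵀ)| ≤ c·m/50 and |‖θ_jⁿ − A^ft‖_F² − ‖U·M_n^{λ_j}·Vᵀ − A^ft‖_F²| ≤ c'·m/50. Then: (i) for every 1 ≤ n ≤ d, (L_pre(θ₂ⁿ) − L_pre(θ₂ⁿ⁻¹)) − (L_pre(θ₁ⁿ) − L_pre(θ₁ⁿ⁻¹)) ≥ c·(m − (2/25)·m) > 0, so that whenever L_pre(θ₁ⁿ) > L_pre(θ₁ⁿ⁻¹) one also has L_pre(θ₂ⁿ) > L_pre(θ₂ⁿ⁻¹) (the stronger regularization λ₁ can only delay the inflection point); and (ii) for every 1 ≤ n ≤ d, ‖θ₁ⁿ − A^ft‖_F²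 > ‖θ₂ⁿ − A^ft‖_F² (stronger regularization strictly increases the unregularized fine-tuning loss). -/

import Mathlib

open Matrix

/-- Squared Frobenius norm of a real matrix. -/
noncomputable def frobSq {d : ℕ} (M : Matrix (Fin d) (Fin d) ℝ) : ℝ :=
  ∑ i, ∑ j, (M i j) ^ 2

/-- The truncated diagonal matrix keeping the first `n` diagonal entries of `diagonal σ`. -/
noncomputable def truncDiag {d : ℕ} (σ : Fin d → ℝ) (n : ℕ) : Matrix (Fin d) (Fin d) ℝ :=
  Matrix.diagonal fun i => if (i : ℕ) < n then σ i else 0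

/-- The diagonal matrix `M_n^λ` with entries `(σ^ft_i + λσ_i)/(1 + λ)` for `i ≤ n`, `0` else. -/
noncomputable def Mreg {d : ℕ} (σ σft : Fin d → ℝ) (lam : ℝ) (n : ℕ) :
    Matrix (Fin d) (Fin d) ℝ :=
  Matrix.diagonal fun i => if (i : ℕ) < n then (σft i + lam * σ i) / (1 + lam) else 0

lemma frobSq_eq_trace {d : ℕ} (M : Matrix (Fin d) (Fin d) ℝ) :
    frobSq M = Matrix.trace (Mᵀ * M) := by
  simp only [frobSq, Matrix.trace, Matrix.diag, Matrix.mul_apply, Matrix.transpose_apply, sq]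
  rw [Finset.sum_comm]

lemma frobSq_conj {d : ℕ} (U V : Matrix (Fin d) (Fin d) ℝ)
    (hU' : Uᵀ * U = 1) (hV' : Vᵀ * V = 1) (X : Matrix (Fin d) (Fin d) ℝ) :
    frobSq (U * X * Vᵀ) = frobSq X := by
  rw [frobSq_eq_trace, frobSq_eq_trace]
  have h1 : (U * X * Vᵀ)ᵀ * (U * X * Vᵀ) = V * (Xᵀ * X * Vᵀ) := by
    simp only [Matrix.transpose_mul, Matrix.transpose_transpose, Matrix.mul_assoc]
    rw [show Uᵀ * (U * (X * Vᵀ)) = X * Vᵀ by rw [← Matrix.mul_assoc, hU', Matrix.one_mul]]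
  rw [h1, Matrix.trace_mul_comm, Matrix.mul_assoc, hV', Matrix.mul_one]

lemma frobSq_diagonal {d : ℕ} (f : Fin d → ℝ) :
    frobSq (Matrix.diagonal f) = ∑ i, f i ^ 2 := by
  unfold frobSq
  refine Finset.sum_congr rfl fun i _ => ?_
  rw [Finset.sum_eq_single i]
  · simp [Matrix.diagonal_apply_eq]
  · intro j _ hj; rw [Matrix.diagonal_apply_ne' _ hj]; ring
  · simp

lemma frobSq_conj_diag {d : ℕ} (U V : Matrix (Fin d) (Fin d) ℝ)
    (hU' : Uᵀ * U = 1) (hV' : Vᵀ * V = 1) (f g : Fin d → ℝ) :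
    frobSq (U * Matrix.diagonal f * Vᵀ - U * Matrix.diagonal g * Vᵀ)
      = ∑ i, (f i - g i) ^ 2 := by
  have : U * Matrix.diagonal f * Vᵀ - U * Matrix.diagonal g * Vᵀ
      = U * (Matrix.diagonal fun i => f i - g i) * Vᵀ := by
    rw [← Matrix.diagonal_sub, Matrix.mul_sub, Matrix.sub_mul]
  rw [this, frobSq_conj U V hU' hV', frobSq_diagonal]

lemma sum_if_diff {d : ℕ} (a b : Fin d → ℝ) (n : ℕ) (h1 : 1 ≤ n) (hn : n ≤ d)
    (j : Fin d) (hjv : (j : ℕ) = n - 1) :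
    (∑ i : Fin d, if (i : ℕ) < n then a i else b i)
      - (∑ i : Fin d, if (i : ℕ) < n - 1 then a i else b i) = a j - b j := by
  rw [← Finset.sum_sub_distrib]
  have hterm : ∀ i : Fin d, ((if (i : ℕ) < n then a i else b i) -
      (if (i : ℕ) < n - 1 then a i else b i)) = if i = j then a i - b i else 0 := by
    intro i
    by_cases hij : i = j
    · subst hij
      have h₁ : (i : ℕ) < n := by omega
      have h₂ : ¬ (i : ℕ) < n - 1 := by omega
      rw [if_pos h₁, if_neg h₂, if_pos rfl]
    · have hv : (i : ℕ) ≠ n - 1 := fun h => hij (Fin.ext (h.trans hjv.symm))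
      have hiff : ((i : ℕ) < n ↔ (i : ℕ) < n - 1) := by omega
      rw [if_neg hij]
      by_cases h : (i : ℕ) < n
      · rw [if_pos h, if_pos (hiff.mp h)]; ring
      · rw [if_neg h, if_neg (fun hh => h (hiff.mpr hh))]; ring
  rw [Finset.sum_congr rfl fun i _ => hterm i,
    Finset.sum_ite_eq' Finset.univ j (fun i => a i - b i)]
  simp

lemma alg_pre (x s l1 l2 : ℝ) (h1 : (0:ℝ) < 1 + l1) (h2 : (0:ℝ) < 1 + l2) :
    ((x / (1 + l2)) ^ 2 - s ^ 2) - ((x / (1 + l1)) ^ 2 - s ^ 2)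
      = x ^ 2 * (1 / (1 + l2) ^ 2 - 1 / (1 + l1) ^ 2) := by
  field_simp
  ring

lemma alg_ft (x l1 l2 : ℝ) (h1 : (0:ℝ) < 1 + l1) (h2 : (0:ℝ) < 1 + l2) :
    (l1 * x / (1 + l1)) ^ 2 - (l2 * x / (1 + l2)) ^ 2
      = x ^ 2 * (l1 ^ 2 / (1 + l1) ^ 2 - l2 ^ 2 / (1 + l2) ^ 2) := by
  field_simp

set_option maxHeartbeats 1000000 in
/-- stronger regularization `λ₁ > λ₂` can only delay the inflection point of
the pre-training loss, and strictly increases the unregularized fine-tuning loss. -/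
theorem regularization_delays_inflection {d : ℕ} (hd : 1 ≤ d)
    (U V : Matrix (Fin d) (Fin d) ℝ)
    (hU : U * Uᵀ = 1) (hU' : Uᵀ * U = 1) (hV : V * Vᵀ = 1) (hV' : Vᵀ * V = 1)
    (σ : Fin d → ℝ) (hσpos : ∀ i, 0 < σ i) (hσanti : StrictAnti σ)
    (σft : Fin d → ℝ) (hσftpos : ∀ i, 0 < σft i)
    (Apre : Matrix (Fin d) (Fin d) ℝ) (hApre : Apre = U * Matrix.diagonal σ * Vᵀ)
    (Aft : Matrix (Fin d) (Fin d) ℝ) (hAft : Aft = U * Matrix.diagonal σft * Vᵀ)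
    (lam₁ lam₂ : ℝ) (hlam₂ : 0 ≤ lam₂) (hlam₁₂ : lam₂ < lam₁)
    (hne : ∀ i : Fin d, σft i ≠ σ i)
    (m : ℝ) (hm : m = sInf {x : ℝ | ∃ i : Fin d, x = (σ i - σft i) ^ 2})
    (c : ℝ) (hc : c = 1 / (1 + lam₂) ^ 2 - 1 / (1 + lam₁) ^ 2)
    (c' : ℝ) (hc' : c' = lam₁ ^ 2 / (1 + lam₁) ^ 2 - lam₂ ^ 2 / (1 + lam₂) ^ 2)
    (θ₁ θ₂ : ℕ → Matrix (Fin d) (Fin d) ℝ)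
    (hpre₁ : ∀ n ≤ d,
      |frobSq (θ₁ n - Apre) - frobSq (U * Mreg σ σft lam₁ n * Vᵀ - Apre)| ≤ c * m / 50)
    (hpre₂ : ∀ n ≤ d,
      |frobSq (θ₂ n - Apre) - frobSq (U * Mreg σ σft lam₂ n * Vᵀ - Apre)| ≤ c * m / 50)
    (hft₁ : ∀ n ≤ d,
      |frobSq (θ₁ n - Aft) - frobSq (U * Mreg σ σft lam₁ n * Vᵀ - Aft)| ≤ c' * m / 50)
    (hft₂ : ∀ n ≤ d,
      |frobSq (θ₂ n - Aft) - frobSq (U * Mreg σ σft lam₂ n * Vᵀ - Aft)| ≤ c' * m / 50) :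
    0 < c ∧ 0 < c' ∧
    (∀ (n : ℕ) (_ : 1 ≤ n) (_ : n ≤ d),
      (frobSq (θ₂ n - Apre) - frobSq (θ₂ (n - 1) - Apre))
          - (frobSq (θ₁ n - Apre) - frobSq (θ₁ (n - 1) - Apre))
        ≥ c * (m - (2 / 25) * m) ∧
      0 < c * (m - (2 / 25) * m) ∧
      (frobSq (θ₁ n - Apre) > frobSq (θ₁ (n - 1) - Apre) →
        frobSq (θ₂ n - Apre) > frobSq (θ₂ (n - 1) - Apre))) ∧
    (∀ (n : ℕ) (_ : 1 ≤ n) (_ : n ≤ d),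
      frobSq (θ₁ n - Aft) > frobSq (θ₂ n - Aft)) := by
  have h1 : (0:ℝ) < 1 + lam₂ := by linarith
  have h2 : (0:ℝ) < 1 + lam₁ := by linarith
  have h3 : (0:ℝ) < lam₁ := lt_of_le_of_lt hlam₂ hlam₁₂
  have hcpos : 0 < c := by
    rw [hc]
    have hlt : 1 / (1 + lam₁) ^ 2 < 1 / (1 + lam₂) ^ 2 := by
      apply one_div_lt_one_div_of_lt (by positivity)
      nlinarith
    linarith
  have hc'pos : 0 < c' := by
    rw [hc']
    have hlt : lam₂ ^ 2 / (1 + lam₂) ^ 2 < lam₁ ^ 2 / (1 + lam₁) ^ 2 := by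
      rw [div_lt_div_iff₀ (by positivity) (by positivity)]
      have hkey : 0 < (lam₁ - lam₂) * (lam₁ + lam₂ + 2 * lam₁ * lam₂) := by
        apply mul_pos (by linarith)
        nlinarith [mul_nonneg hlam₂ h3.le]
      nlinarith [hkey]
    linarith
  have hSfin : {x : ℝ | ∃ i : Fin d, x = (σ i - σft i) ^ 2}.Finite := by
    have : {x : ℝ | ∃ i : Fin d, x = (σ i - σft i) ^ 2}
        = Set.range fun i : Fin d => (σ i - σft i) ^ 2 := by
      ext x; simp [eq_comm]
    rw [this]; exact Set.finite_range _
  have hSne : {x : ℝ | ∃ i : Fin d, x = (σ i - σft i) ^ 2}.Nonempty :=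
    ⟨(σ ⟨0, hd⟩ - σft ⟨0, hd⟩) ^ 2, (⟨0, hd⟩ : Fin d), rfl⟩
  have hmmem : m ∈ {x : ℝ | ∃ i : Fin d, x = (σ i - σft i) ^ 2} := by
    rw [hm]; exact hSne.csInf_mem hSfin
  have hmpos : 0 < m := by
    obtain ⟨i, hi⟩ := hmmem
    have hxi : σ i - σft i ≠ 0 := sub_ne_zero.mpr (fun h => hne i h.symm)
    rw [hi]; positivity
  have hmle : ∀ i : Fin d, m ≤ (σ i - σft i) ^ 2 := fun i => by
    rw [hm]; exact csInf_le hSfin.bddBelow ⟨i, rfl⟩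
  have keypre : ∀ lam : ℝ, 0 ≤ lam → ∀ n : ℕ,
      frobSq (U * Mreg σ σft lam n * Vᵀ - Apre)
        = ∑ i : Fin d,
            (if (i : ℕ) < n then ((σft i - σ i) / (1 + lam)) ^ 2 else (σ i) ^ 2) := by
    intro lam hlam n
    have hl : (0:ℝ) < 1 + lam := by linarith
    rw [hApre, Mreg, frobSq_conj_diag U V hU' hV']
    refine Finset.sum_congr rfl fun i _ => ?_
    by_cases h : (i : ℕ) < n
    · simp only [h, if_true]
      rw [div_sub' hl.ne', div_pow, div_pow]
      congr 1; ring
    · simp [h]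
  have keyft : ∀ lam : ℝ, 0 ≤ lam → ∀ n : ℕ,
      frobSq (U * Mreg σ σft lam n * Vᵀ - Aft)
        = ∑ i : Fin d,
            (if (i : ℕ) < n then (lam * (σ i - σft i) / (1 + lam)) ^ 2 else (σft i) ^ 2) := by
    intro lam hlam n
    have hl : (0:ℝ) < 1 + lam := by linarith
    rw [hAft, Mreg, frobSq_conj_diag U V hU' hV']
    refine Finset.sum_congr rfl fun i _ => ?_
    by_cases h : (i : ℕ) < n
    · simp only [h, if_true]
      rw [div_sub' hl.ne', div_pow, div_pow]
      congr 1; ring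
    · simp [h]
  have hlam₁ : (0:ℝ) ≤ lam₁ := h3.le
  refine ⟨hcpos, hc'pos, ?_, ?_⟩
  · -- part (i)
    intro n hn1 hnd
    obtain ⟨j, hjv⟩ : ∃ j : Fin d, (j : ℕ) = n - 1 := ⟨⟨n - 1, by omega⟩, rfl⟩
    have hdiff : ∀ lam : ℝ, 0 ≤ lam →
        frobSq (U * Mreg σ σft lam n * Vᵀ - Apre)
          - frobSq (U * Mreg σ σft lam (n - 1) * Vᵀ - Apre)
          = ((σft j - σ j) / (1 + lam)) ^ 2 - (σ j) ^ 2 := by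
      intro lam hlam
      rw [keypre lam hlam n, keypre lam hlam (n - 1)]
      exact sum_if_diff _ _ n hn1 hnd j hjv
    have hd1 := hdiff lam₁ hlam₁
    have hd2 := hdiff lam₂ hlam₂
    have hkey : (frobSq (U * Mreg σ σft lam₂ n * Vᵀ - Apre)
          - frobSq (U * Mreg σ σft lam₂ (n - 1) * Vᵀ - Apre))
        - (frobSq (U * Mreg σ σft lam₁ n * Vᵀ - Apre)
          - frobSq (U * Mreg σ σft lam₁ (n - 1) * Vᵀ - Apre))
        = (σft j - σ j) ^ 2 * c := by
      rw [hd1, hd2, hc]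
      exact alg_pre _ _ _ _ h2 h1
    have hsq : m ≤ (σft j - σ j) ^ 2 := by
      have hr : (σft j - σ j) ^ 2 = (σ j - σft j) ^ 2 := by ring
      rw [hr]; exact hmle j
    have hcm : c * m ≤ (σft j - σ j) ^ 2 * c := by
      rw [mul_comm c m]; exact mul_le_mul_of_nonneg_right hsq hcpos.le
    have e1 := abs_le.mp (hpre₁ n hnd)
    have e2 := abs_le.mp (hpre₁ (n - 1) (by omega))
    have e3 := abs_le.mp (hpre₂ n hnd)
    have e4 := abs_le.mp (hpre₂ (n - 1) (by omega))
    have hmain : (frobSq (θ₂ n - Apre) - frobSq (θ₂ (n - 1) - Apre))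
          - (frobSq (θ₁ n - Apre) - frobSq (θ₁ (n - 1) - Apre))
        ≥ c * (m - (2 / 25) * m) := by
      have hring : c * (m - (2 / 25) * m) = c * m - (2 / 25) * (c * m) := by ring
      linarith [e1.1, e1.2, e2.1, e2.2, e3.1, e3.2, e4.1, e4.2, hkey, hcm, hring]
    have hpos : 0 < c * (m - (2 / 25) * m) := by
      have hring : c * (m - (2 / 25) * m) = (23 / 25) * (c * m) := by ring
      have := mul_pos hcpos hmpos
      linarith
    exact ⟨hmain, hpos, fun h => by linarith⟩
  · -- part (ii)
    intro n hn1 hnd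
    have hQ : frobSq (U * Mreg σ σft lam₁ n * Vᵀ - Aft)
          - frobSq (U * Mreg σ σft lam₂ n * Vᵀ - Aft)
        ≥ c' * m := by
      rw [keyft lam₁ hlam₁ n, keyft lam₂ hlam₂ n, ← Finset.sum_sub_distrib]
      have hterm : ∀ i : Fin d,
          ((if (i : ℕ) < n then (lam₁ * (σ i - σft i) / (1 + lam₁)) ^ 2 else (σft i) ^ 2)
            - (if (i : ℕ) < n then (lam₂ * (σ i - σft i) / (1 + lam₂)) ^ 2 else (σft i) ^ 2))
          = if (i : ℕ) < n then (σ i - σft i) ^ 2 * c' else 0 := by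
        intro i
        by_cases h : (i : ℕ) < n
        · simp only [h, if_true]
          rw [hc']
          exact alg_ft _ _ _ h2 h1
        · simp [h]
      rw [Finset.sum_congr rfl fun i _ => hterm i]
      have hnn : ∀ i : Fin d, i ∈ Finset.univ →
          (0:ℝ) ≤ if (i : ℕ) < n then (σ i - σft i) ^ 2 * c' else 0 := by
        intro i _
        by_cases h : (i : ℕ) < n
        · simp only [h, if_true]; positivity
        · simp [h]
      have hsingle := Finset.single_le_sum hnn (Finset.mem_univ (⟨0, hd⟩ : Fin d))
      have hi0lt : ((⟨0, hd⟩ : Fin d) : ℕ) < n := hn1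
      rw [if_pos hi0lt] at hsingle
      have h5 : m * c' ≤ (σ (⟨0, hd⟩ : Fin d) - σft ⟨0, hd⟩) ^ 2 * c' :=
        mul_le_mul_of_nonneg_right (hmle _) hc'pos.le
      have h6 : c' * m = m * c' := mul_comm _ _
      linarith
    have e1 := abs_le.mp (hft₁ n hnd)
    have e2 := abs_le.mp (hft₂ n hnd)
    have := mul_pos hc'pos hmpos
    linarith [e1.1, e1.2, e2.1, e2.2]
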